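/- arXiv:2408.00618 — 2 statements merged into one kernel-verified Lean document; each statement's English description precedes it below -/
import Mathlib

section
/- Let y ∈ ℝⁿ, x ∈ ℝⁿ, and r : {1,…,n} → {1,…,L} with all group counts n_ℓ positive, sample proportions π̂_ℓ = n_ℓ/n, group means x̄_ℓ = n_ℓ^{-1} ∑_{i : r(i)=ℓ} x_i, and group sample variances σ̂²_{x[ℓ]} = n_ℓ^{-1} ∑_{i : r(i)=ℓ} x_i² − x̄_ℓ². Assume the equal-variance condition σ̂²_{x[ℓ]} = σ̂²_{x[1]} for all ℓ. Let X^M = [1, x, Z] with constraint matrix A^M encoding the ABC ∑_ℓ π̂_ℓ β_ℓ = 0, and let X = [1, x, Z, D_x Z] (where D_x = diag(x), so D_x Z contains the columnwise products of x with the group indicators) with constraint matrix A encoding both ∑_ℓ π̂_ℓ β_ℓ = 0 and ∑_ℓ π̂_ℓ γ_ℓ = 0. Let V^M and V be the covariance factors of the two constrained models (assumed to exist), let j be the coordinate of α₁ (the coefficient on x), and let Ŝ_M, Ŝ > 0 be residual scales with Ŝ ≤ Ŝ_M. Then the standard error of the main x-effect under the cat-modified model is no larger than under the main-only model: Ŝ·√(V_{jj})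 ≤ Ŝ_M·√(V^M_{jj}). -/
open Finset Matrix

noncomputable section

/-- The (scaled) sample variance of `x` within group `ℓ` of the categorical covariate `r`:
`σ̂²_{x[ℓ]} = n_ℓ⁻¹ ∑_{i : r i = ℓ} x i ^ 2 − x̄_ℓ ^ 2`. -/
def groupVar {n L : ℕ} (x : Fin n → ℝ) (r : Fin n → Fin L) (ℓ : Fin L) : ℝ :=
  (∑ i ∈ univ.filter (fun i : Fin n => r i = ℓ), x i ^ 2) /
      ((univ.filter (fun i : Fin n => r i = ℓ)).card : ℝ) -
    ((∑ i ∈ univ.filter (fun i : Fin n => r i = ℓ), x i) /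
      ((univ.filter (fun i : Fin n => r i = ℓ)).card : ℝ)) ^ 2

/-- Main-only ANCOVA design matrix `[1, x, Z]`. -/
def designMain {n L : ℕ} (x : Fin n → ℝ) (r : Fin n → Fin L) :
    Matrix (Fin n) (Unit ⊕ Unit ⊕ Fin L) ℝ :=
  Matrix.of fun i j =>
    match j with
    | Sum.inl _ => 1
    | Sum.inr (Sum.inl _) => x i
    | Sum.inr (Sum.inr ℓ) => if r i = ℓ then 1 else 0

/-- Cat-modified design matrix `[1, x, Z, D_x Z]`, where `D_x Z` consists of the
columnwise products of `x` with the group indicators. -/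
def designCat {n L : ℕ} (x : Fin n → ℝ) (r : Fin n → Fin L) :
    Matrix (Fin n) ((Unit ⊕ Unit ⊕ Fin L) ⊕ Fin L) ℝ :=
  Matrix.of fun i j =>
    match j with
    | Sum.inl j' => designMain x r i j'
    | Sum.inr ℓ => if r i = ℓ then x i else 0

/-- Constraint matrix encoding the abundance-based constraint `∑_ℓ π̂_ℓ β_ℓ = 0`. -/
def constrMain {n L : ℕ} (r : Fin n → Fin L) :
    Matrix (Fin 1) (Unit ⊕ Unit ⊕ Fin L) ℝ :=
  Matrix.of fun _ j =>
    match j with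
    | Sum.inr (Sum.inr ℓ) => ((univ.filter (fun i : Fin n => r i = ℓ)).card : ℝ) / n
    | _ => 0

/-- Constraint matrix encoding the abundance-based constraints `∑_ℓ π̂_ℓ β_ℓ = 0` and
`∑_ℓ π̂_ℓ γ_ℓ = 0`. -/
def constrCat {n L : ℕ} (r : Fin n → Fin L) :
    Matrix (Fin 2) ((Unit ⊕ Unit ⊕ Fin L) ⊕ Fin L) ℝ :=
  Matrix.of fun k j =>
    if k = 0 then
      match j with
      | Sum.inl (Sum.inr (Sum.inr ℓ)) =>
        ((univ.filter (fun i : Fin n => r i = ℓ)).card : ℝ) / n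
      | _ => 0
    else
      match j with
      | Sum.inr ℓ => ((univ.filter (fun i : Fin n => r i = ℓ)).card : ℝ) / n
      | _ => 0

/-!
At the slope coordinate `j`, both covariance factors equal `W⁻¹`, where
`W = ∑ᵢ (xᵢ - x̄_{r i})²` is the within-group sum of squares of `x`. Indeed `V (W eⱼ) = θ` as
soon as `θ` satisfies the constraints and the normal equation `XᵀXθ = W eⱼ + Aᵀμ`. In the
main-only model `θ = (-x̄, 1, (x̄ - x̄_ℓ)_ℓ)` does: `Xθ` is the within-group residual of `x`,
which is orthogonal to `1` and to `Z`, and its inner product with `x` is `W`. Padding `θ` with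
zero interaction coefficients solves the cat-modified model as well: the inner product of the
residual with the `ℓ`-th column of `D_x Z` is `n_ℓ σ̂²_{x[ℓ]}`, which under equal variances is
`π̂_ℓ W` and is absorbed by the multiplier of the interaction constraint. The two standard
errors therefore differ only through `Ŝ ≤ Ŝ_M`.
-/

def covFactor {m p d : Type*} [Fintype m] [Fintype p] [Fintype d] [DecidableEq d]
    (X : Matrix m p ℝ) (Q : Matrix p d ℝ) : Matrix p p ℝ :=
  Q * ((X * Q)ᵀ * (X * Q))⁻¹ * Qᵀ

theorem covFactor_mulVec_of_normal_eq {m p k d : Type*} [Fintype m] [Fintype p] [Fintype k]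
    [Fintype d] [DecidableEq d] {X : Matrix m p ℝ} {A : Matrix k p ℝ} {Q : Matrix p d ℝ}
    (hnull : ∀ θ, A *ᵥ θ = 0 ↔ ∃ w, θ = Q *ᵥ w) (hG : IsUnit ((X * Q)ᵀ * (X * Q)).det)
    {θ b : p → ℝ} {μ : k → ℝ} (hθ : A *ᵥ θ = 0) (hnormal : Xᵀ *ᵥ (X *ᵥ θ) = b + Aᵀ *ᵥ μ) :
    covFactor X Q *ᵥ b = θ := by
  obtain ⟨w, rfl⟩ := (hnull θ).1 hθ
  have hAQ : A * Q = 0 := ext_iff_mulVec.2 fun v => by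
    rw [← mulVec_mulVec, zero_mulVec]
    exact (hnull _).2 ⟨v, rfl⟩
  have hQA : Qᵀ *ᵥ (Aᵀ *ᵥ μ) = 0 := by
    rw [mulVec_mulVec, ← transpose_mul, hAQ, transpose_zero, zero_mulVec]
  have hGw : ((X * Q)ᵀ * (X * Q)) *ᵥ w = Qᵀ *ᵥ b := by
    have := congrArg (Qᵀ *ᵥ ·) hnormal
    simpa only [mulVec_add, hQA, add_zero, mulVec_mulVec, transpose_mul, Matrix.mul_assoc]
      using this
  rw [covFactor, ← mulVec_mulVec, ← hGw, mulVec_mulVec, Matrix.mul_assoc, nonsing_inv_mul _ hG,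
    Matrix.mul_one]

section Ancova

variable {n L : ℕ} (x : Fin n → ℝ) (r : Fin n → Fin L)

def groupMean (ℓ : Fin L) : ℝ :=
  (∑ i ∈ {i | r i = ℓ}, x i) / #{i | r i = ℓ}

def withinResid (i : Fin n) : ℝ :=
  x i - groupMean x r (r i)

def withinSS : ℝ :=
  ∑ i, withinResid x r i ^ 2

theorem card_mul_groupMean (ℓ : Fin L) :
    (#{i | r i = ℓ} : ℝ) * groupMean x r ℓ = ∑ i ∈ {i | r i = ℓ}, x i := by
  rcases eq_or_ne #{i | r i = ℓ} 0 with h | h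
  · rw [card_eq_zero.1 h]
    simp
  · exact mul_div_cancel₀ _ (Nat.cast_ne_zero.2 h)

theorem sum_filter_withinResid (ℓ : Fin L) : ∑ i ∈ {i | r i = ℓ}, withinResid x r i = 0 := by
  rw [sum_congr rfl fun i hi => by rw [withinResid, (mem_filter.1 hi).2], sum_sub_distrib,
    sum_const, nsmul_eq_mul, card_mul_groupMean, sub_self]

theorem sum_filter_mul_withinResid (ℓ : Fin L) :
    ∑ i ∈ {i | r i = ℓ}, x i * withinResid x r i = #{i | r i = ℓ} * groupVar x r ℓ := by
  rcases eq_or_ne #{i | r i = ℓ} 0 with h | h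
  · rw [h, card_eq_zero.1 h]
    simp
  · rw [sum_congr rfl fun i hi => by rw [withinResid, (mem_filter.1 hi).2], groupVar, groupMean]
    simp only [mul_sub, sum_sub_distrib, ← sum_mul, ← pow_two]
    field_simp

theorem sum_card_filter_mul (f : Fin L → ℝ) :
    ∑ ℓ, (#{i | r i = ℓ} : ℝ) * f ℓ = ∑ i, f (r i) := by
  rw [← sum_fiberwise univ r (fun i => f (r i))]
  refine sum_congr rfl fun ℓ _ => ?_
  rw [sum_congr rfl fun i hi => congrArg f (mem_filter.1 hi).2, sum_const, nsmul_eq_mul]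

theorem sum_withinResid : ∑ i, withinResid x r i = 0 := by
  rw [← sum_fiberwise univ r]
  exact sum_eq_zero fun ℓ _ => sum_filter_withinResid x r ℓ

theorem sum_mul_withinResid : ∑ i, x i * withinResid x r i = withinSS x r := by
  have hmean : ∑ i, groupMean x r (r i) * withinResid x r i = 0 := by
    rw [← sum_fiberwise univ r]
    refine sum_eq_zero fun ℓ _ => ?_
    rw [sum_congr rfl fun i hi => by rw [(mem_filter.1 hi).2], ← mul_sum,
      sum_filter_withinResid, mul_zero]
  calc ∑ i, x i * withinResid x r i
      = ∑ i, (withinResid x r i ^ 2 + groupMean x r (r i) * withinResid x r i) :=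
        sum_congr rfl fun i _ => by rw [withinResid]; ring
    _ = withinSS x r := by rw [sum_add_distrib, hmean, add_zero, withinSS]

theorem sum_filter_mul_withinResid_of_groupVar_eq {ℓ₀ : Fin L}
    (heqvar : ∀ ℓ, groupVar x r ℓ = groupVar x r ℓ₀) (ℓ : Fin L) :
    ∑ i ∈ {i | r i = ℓ}, x i * withinResid x r i = #{i | r i = ℓ} / n * withinSS x r := by
  have hSS : withinSS x r = n * groupVar x r ℓ₀ := by
    rw [← sum_mul_withinResid, ← sum_fiberwise univ r]
    simp only [sum_filter_mul_withinResid, heqvar]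
    rw [sum_card_filter_mul r (fun _ => groupVar x r ℓ₀), sum_const, card_univ, Fintype.card_fin,
      nsmul_eq_mul]
  rw [sum_filter_mul_withinResid, heqvar, hSS]
  obtain rfl | hn := eq_or_ne n 0
  · simp
  · field_simp

def withinResidCoef : Unit ⊕ Unit ⊕ Fin L → ℝ :=
  Sum.elim (fun _ => -((∑ i, x i) / n))
    (Sum.elim (fun _ => 1) fun ℓ => (∑ i, x i) / n - groupMean x r ℓ)

theorem designMain_mulVec (θ : Unit ⊕ Unit ⊕ Fin L → ℝ) (i : Fin n) :
    (designMain x r *ᵥ θ) i =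
      θ (.inl ()) + θ (.inr (.inl ())) * x i + θ (.inr (.inr (r i))) := by
  simp only [mulVec, dotProduct, designMain, of_apply, Fintype.sum_sum_type, univ_unique,
    sum_singleton, one_mul, ite_mul, zero_mul, sum_ite_eq, mem_univ, if_true]
  ring

theorem designMain_mulVec_withinResidCoef :
    designMain x r *ᵥ withinResidCoef x r = withinResid x r := by
  funext i
  rw [designMain_mulVec, withinResid]
  simp only [withinResidCoef, Sum.elim_inl, Sum.elim_inr]
  ring

theorem constrMain_mulVec (θ : Unit ⊕ Unit ⊕ Fin L → ℝ) :
    constrMain r *ᵥ θ = fun _ => ∑ ℓ, (#{i | r i = ℓ} : ℝ) / n * θ (.inr (.inr ℓ)) := by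
  funext k
  simp [constrMain, mulVec, dotProduct, Fintype.sum_sum_type]

theorem constrMain_mulVec_withinResidCoef : constrMain r *ᵥ withinResidCoef x r = 0 := by
  have hcentred : ∑ i, ((∑ i, x i) / n - groupMean x r (r i)) = 0 := by
    calc ∑ i, ((∑ i, x i) / n - groupMean x r (r i))
        = ∑ i, ((∑ i, x i) / n - x i + withinResid x r i) :=
          sum_congr rfl fun i _ => by rw [withinResid]; ring
      _ = n * ((∑ i, x i) / n) - ∑ i, x i := by
          rw [sum_add_distrib, sum_withinResid, sum_sub_distrib, sum_const, card_univ,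
            Fintype.card_fin, nsmul_eq_mul, add_zero]
      _ = 0 := by
          obtain rfl | hn := eq_or_ne n 0
          · simp
          · field_simp; ring
  rw [constrMain_mulVec]
  funext k
  simp only [withinResidCoef, Sum.elim_inr, Pi.zero_apply]
  rw [← mul_zero (n : ℝ)⁻¹, ← hcentred,
    ← sum_card_filter_mul r fun ℓ => (∑ i, x i) / n - groupMean x r ℓ, mul_sum]
  exact sum_congr rfl fun ℓ _ => by ring

theorem designMain_transpose_mulVec (v : Fin n → ℝ) :
    (designMain x r)ᵀ *ᵥ v = Sum.elim (fun _ => ∑ i, v i)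
      (Sum.elim (fun _ => ∑ i, x i * v i) fun ℓ => ∑ i ∈ {i | r i = ℓ}, v i) := by
  funext p
  rcases p with _ | _ | ℓ <;>
    simp [designMain, mulVec_transpose, vecMul, dotProduct, sum_filter, mul_comm]

theorem designCat_mulVec_sumElim_zero (θ : Unit ⊕ Unit ⊕ Fin L → ℝ) :
    designCat x r *ᵥ Sum.elim θ 0 = designMain x r *ᵥ θ := by
  funext i
  simp [designCat, mulVec, dotProduct, Fintype.sum_sum_type]

theorem designCat_transpose_mulVec (v : Fin n → ℝ) :
    (designCat x r)ᵀ *ᵥ v =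
      Sum.elim ((designMain x r)ᵀ *ᵥ v) fun ℓ => ∑ i ∈ {i | r i = ℓ}, x i * v i := by
  funext p
  rcases p with p | ℓ <;>
    simp [designCat, mulVec_transpose, vecMul, dotProduct, sum_filter, mul_comm]

theorem constrCat_mulVec_sumElim_zero {θ : Unit ⊕ Unit ⊕ Fin L → ℝ}
    (hθ : constrMain r *ᵥ θ = 0) : constrCat r *ᵥ Sum.elim θ 0 = 0 := by
  have h := congrFun hθ 0
  rw [constrMain_mulVec] at h
  funext k
  fin_cases k <;> simp [constrCat, mulVec, dotProduct, Fintype.sum_sum_type, h]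

theorem constrCat_transpose_mulVec (s : ℝ) :
    (constrCat r)ᵀ *ᵥ ![0, s] =
      Sum.elim (0 : Unit ⊕ Unit ⊕ Fin L → ℝ) fun ℓ => (#{i | r i = ℓ} : ℝ) / n * s := by
  funext p
  rcases p with _ | _ | _ | ℓ <;> simp [constrCat, mulVec, dotProduct, Fin.sum_univ_two]

theorem designMain_normal_eq :
    (designMain x r)ᵀ *ᵥ (designMain x r *ᵥ withinResidCoef x r) =
      Pi.single (.inr (.inl ())) (withinSS x r) + (constrMain r)ᵀ *ᵥ 0 := by
  rw [designMain_mulVec_withinResidCoef, designMain_transpose_mulVec, mulVec_zero, add_zero,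
    sum_withinResid, sum_mul_withinResid]
  funext p
  rcases p with _ | _ | ℓ <;> simp [sum_filter_withinResid]

theorem designCat_normal_eq {ℓ₀ : Fin L} (heqvar : ∀ ℓ, groupVar x r ℓ = groupVar x r ℓ₀) :
    (designCat x r)ᵀ *ᵥ (designCat x r *ᵥ Sum.elim (withinResidCoef x r) 0) =
      Pi.single (.inl (.inr (.inl ()))) (withinSS x r) +
        (constrCat r)ᵀ *ᵥ ![0, withinSS x r] := by
  rw [designCat_mulVec_sumElim_zero, designCat_transpose_mulVec, designMain_normal_eq,
    mulVec_zero, add_zero, designMain_mulVec_withinResidCoef, constrCat_transpose_mulVec]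
  funext p
  rcases p with p | ℓ
  · simp [Pi.single_apply]
  · simp [sum_filter_mul_withinResid_of_groupVar_eq x r heqvar]

variable {d : Type*} [Fintype d] [DecidableEq d]

theorem covFactor_designMain_slope {Q : Matrix (Unit ⊕ Unit ⊕ Fin L) d ℝ}
    (hnull : ∀ θ, constrMain r *ᵥ θ = 0 ↔ ∃ w, θ = Q *ᵥ w)
    (hG : IsUnit ((designMain x r * Q)ᵀ * (designMain x r * Q)).det) :
    covFactor (designMain x r) Q (.inr (.inl ())) (.inr (.inl ())) = (withinSS x r)⁻¹ := by
  have h := congrFun (covFactor_mulVec_of_normal_eq hnull hG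
    (constrMain_mulVec_withinResidCoef x r) (designMain_normal_eq x r)) (.inr (.inl ()))
  simp only [mulVec_single, withinResidCoef] at h
  exact eq_inv_of_mul_eq_one_left h

theorem covFactor_designCat_slope {ℓ₀ : Fin L} (heqvar : ∀ ℓ, groupVar x r ℓ = groupVar x r ℓ₀)
    {Q : Matrix ((Unit ⊕ Unit ⊕ Fin L) ⊕ Fin L) d ℝ}
    (hnull : ∀ θ, constrCat r *ᵥ θ = 0 ↔ ∃ w, θ = Q *ᵥ w)
    (hG : IsUnit ((designCat x r * Q)ᵀ * (designCat x r * Q)).det) :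
    covFactor (designCat x r) Q (.inl (.inr (.inl ()))) (.inl (.inr (.inl ()))) =
      (withinSS x r)⁻¹ := by
  have h := congrFun (covFactor_mulVec_of_normal_eq hnull hG
    (constrCat_mulVec_sumElim_zero r (constrMain_mulVec_withinResidCoef x r))
    (designCat_normal_eq x r heqvar)) (.inl (.inr (.inl ())))
  simp only [mulVec_single, withinResidCoef] at h
  exact eq_inv_of_mul_eq_one_left h

end Ancova

theorem abc_ancova_se_decrease_general
    {n L : ℕ} (hL : 0 < L) (dM d : ℕ)
    (x : Fin n → ℝ) (r : Fin n → Fin L)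
    -- equal-variance condition
    (heqvar : ∀ ℓ : Fin L, groupVar x r ℓ = groupVar x r ⟨0, hL⟩)
    (QM : Matrix (Unit ⊕ Unit ⊕ Fin L) (Fin dM) ℝ)
    (Q : Matrix ((Unit ⊕ Unit ⊕ Fin L) ⊕ Fin L) (Fin d) ℝ)
    -- the columns span the null spaces of the constraint matrices
    (hQMnull : ∀ θ : (Unit ⊕ Unit ⊕ Fin L) → ℝ,
      (constrMain r).mulVec θ = 0 ↔ ∃ w : Fin dM → ℝ, θ = QM.mulVec w)
    (hQnull : ∀ θ : ((Unit ⊕ Unit ⊕ Fin L) ⊕ Fin L) → ℝ,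
      (constrCat r).mulVec θ = 0 ↔ ∃ w : Fin d → ℝ, θ = Q.mulVec w)
    -- the reparametrized designs have full column rank
    (hGramM : IsUnit ((designMain x r * QM)ᵀ * (designMain x r * QM)).det)
    (hGram : IsUnit ((designCat x r * Q)ᵀ * (designCat x r * Q)).det)
    -- residual scales
    (SM S : ℝ) (hle : S ≤ SM) :
    S * Real.sqrt
        ((Q * ((designCat x r * Q)ᵀ * (designCat x r * Q))⁻¹ * Qᵀ)
          (Sum.inl (Sum.inr (Sum.inl ()))) (Sum.inl (Sum.inr (Sum.inl ())))) ≤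
      SM * Real.sqrt
        ((QM * ((designMain x r * QM)ᵀ * (designMain x r * QM))⁻¹ * QMᵀ)
          (Sum.inr (Sum.inl ())) (Sum.inr (Sum.inl ()))) := by
  have hMain := covFactor_designMain_slope x r hQMnull hGramM
  have hCat := covFactor_designCat_slope x r heqvar hQnull hGram
  rw [covFactor] at hMain hCat
  rw [hMain, hCat]
  exact mul_le_mul_of_nonneg_right hle (Real.sqrt_nonneg _)

/-- Theorem 7: the standard error of the main `x`-effect does not
increase when the categorical-continuous interaction is added under ABCs.  Under the
equal-variance condition, with `QM` and `Q` having orthonormal columns spanning the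
null spaces of the respective constraint matrices, the reparametrized designs of full
column rank (so the covariance factors exist), and residual scales `S ≤ SM`, the
standard error of the coefficient on `x` in the cat-modified model is no larger than in
the main-only model. -/
theorem abc_ancova_se_decrease
    {n L : ℕ} (hL : 0 < L) (dM d : ℕ)
    (x : Fin n → ℝ) (r : Fin n → Fin L)
    (hcount : ∀ ℓ : Fin L, 0 < (univ.filter (fun i : Fin n => r i = ℓ)).card)
    -- equal-variance condition
    (heqvar : ∀ ℓ : Fin L, groupVar x r ℓ = groupVar x r ⟨0, hL⟩)
    (QM : Matrix (Unit ⊕ Unit ⊕ Fin L) (Fin dM) ℝ)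
    (Q : Matrix ((Unit ⊕ Unit ⊕ Fin L) ⊕ Fin L) (Fin d) ℝ)
    -- orthonormal columns
    (hQMorth : QMᵀ * QM = 1)
    (hQorth : Qᵀ * Q = 1)
    -- the columns span the null spaces of the constraint matrices
    (hQMnull : ∀ θ : (Unit ⊕ Unit ⊕ Fin L) → ℝ,
      (constrMain r).mulVec θ = 0 ↔ ∃ w : Fin dM → ℝ, θ = QM.mulVec w)
    (hQnull : ∀ θ : ((Unit ⊕ Unit ⊕ Fin L) ⊕ Fin L) → ℝ,
      (constrCat r).mulVec θ = 0 ↔ ∃ w : Fin d → ℝ, θ = Q.mulVec w)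
    -- the reparametrized designs have full column rank
    (hGramM : IsUnit ((designMain x r * QM)ᵀ * (designMain x r * QM)).det)
    (hGram : IsUnit ((designCat x r * Q)ᵀ * (designCat x r * Q)).det)
    -- residual scales
    (SM S : ℝ) (hSM : 0 < SM) (hS : 0 < S) (hle : S ≤ SM) :
    S * Real.sqrt
        ((Q * ((designCat x r * Q)ᵀ * (designCat x r * Q))⁻¹ * Qᵀ)
          (Sum.inl (Sum.inr (Sum.inl ()))) (Sum.inl (Sum.inr (Sum.inl ())))) ≤
      SM * Real.sqrt
        ((QM * ((designMain x r * QM)ᵀ * (designMain x r * QM))⁻¹ * QMᵀ)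
          (Sum.inr (Sum.inl ())) (Sum.inr (Sum.inl ()))) :=
  abc_ancova_se_decrease_general hL dM d x r heqvar QM Q hQMnull hQnull hGramM hGram SM S hle

end
end

section
/- Let y ∈ ℝⁿ, x ∈ ℝⁿ, and r : {1,…,n} → {1,…,L} with all group counts n_ℓ positive, sample proportions π̂_ℓ = n_ℓ/n, and group sample variances σ̂²_{x[ℓ]} = n_ℓ^{-1} ∑_{i : r(i)=ℓ} x_i² − (n_ℓ^{-1} ∑_{i : r(i)=ℓ} x_i)². Assume the equal-variance condition σ̂²_{x[ℓ]} = σ̂²_{x[1]} for all ℓ. Let X^M = [1, x, Z] with constraint matrix A^M encoding the ABC ∑_ℓ π̂_ℓ β_ℓ = 0, and let X = [1, x, Z, D_x Z] (D_x = diag(x)) with constraint matrix A encoding ∑_ℓ π̂_ℓ β_ℓ = 0 and ∑_ℓ π̂_ℓ γ_ℓ = 0. Let V^M and V be the covariance factors of the two constrained models (assumed to exist), and let j be the coordinate of α₁, the coefficient on x. Then the diagonal entries corresponding to α₁ coincide: V_{jj} = V^M_{jj}. Consequently, for any residual scales Ŝ_M, Ŝ > 0, the standard errors satisfy the exact ratio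 SE(α̂₁) = (Ŝ/Ŝ_M)·SE(α̂₁^M). -/
open Finset Matrix

noncomputable section

/-!
In a constrained least-squares model, the diagonal entry `V_jj` of the covariance factor equals
`θ₀ j`, where `θ₀` is the Riesz representer of the coordinate functional `θ ↦ θ j` on the
constraint space `{Aθ = 0}` for the inner product `⟨Xθ, Xθ'⟩`. In both ANCOVA models a multiple
of one and the same coefficient vector is such a representer: its fitted values are the
within-group centred covariate `x i - x̄_{r i}`. These are orthogonal to every function of the
group, and, when all groups have the same variance `σ̂²`, also to `x i * γ (r i)` for every `γ`
satisfying the abundance-based constraint. Hence `V_xx = 1 / (n σ̂²)` in both models.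
-/

namespace Matrix

variable {R m p d k : Type*} [Fintype m] [Fintype d] [DecidableEq d]

theorem mul_inv_gram_mul_transpose_apply_self [CommRing R] (M : Matrix m d R)
    (Q : Matrix p d R) (hG : IsUnit (Mᵀ * M).det) {j : p} {w : d → R}
    (hw : ∀ v, (M *ᵥ v) ⬝ᵥ (M *ᵥ w) = (Q *ᵥ v) j) :
    (Q * (Mᵀ * M)⁻¹ * Qᵀ) j j = (Q *ᵥ w) j := by
  have hGw : (Mᵀ * M) *ᵥ w = Q j := dotProduct_eq _ _ fun v => by
    rw [← mulVec_mulVec, dotProduct_comm, dotProduct_mulVec, vecMul_transpose, hw]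
    rfl
  have hw' : w = (Mᵀ * M)⁻¹ *ᵥ Q j := by
    rw [← hGw, mulVec_mulVec, nonsing_inv_mul _ hG, one_mulVec]
  rw [hw', mulVec_mulVec]
  rfl

variable [Fintype p]

theorem covFactor_apply_self_eq [CommRing R] (X : Matrix m p R) (A : Matrix k p R)
    (Q : Matrix p d R) (hnull : ∀ θ, A *ᵥ θ = 0 ↔ ∃ w, θ = Q *ᵥ w)
    (hG : IsUnit ((X * Q)ᵀ * (X * Q)).det) {j : p} {θ₀ : p → R} (hθ₀ : A *ᵥ θ₀ = 0)
    (hdual : ∀ θ, A *ᵥ θ = 0 → (X *ᵥ θ) ⬝ᵥ (X *ᵥ θ₀) = θ j) :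
    (Q * ((X * Q)ᵀ * (X * Q))⁻¹ * Qᵀ) j j = θ₀ j := by
  obtain ⟨w, rfl⟩ := (hnull θ₀).1 hθ₀
  refine mul_inv_gram_mul_transpose_apply_self _ _ hG fun v => ?_
  simpa only [mulVec_mulVec] using hdual (Q *ᵥ v) ((hnull _).2 ⟨v, rfl⟩)

theorem eq_zero_of_mulVec_eq_zero_of_constr [CommRing R] [IsDomain R] (X : Matrix m p R)
    (A : Matrix k p R) (Q : Matrix p d R) (hnull : ∀ θ, A *ᵥ θ = 0 ↔ ∃ w, θ = Q *ᵥ w)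
    (hG : IsUnit ((X * Q)ᵀ * (X * Q)).det) {θ : p → R} (hAθ : A *ᵥ θ = 0)
    (hXθ : X *ᵥ θ = 0) : θ = 0 := by
  obtain ⟨w, rfl⟩ := (hnull θ).1 hAθ
  have hw : ((X * Q)ᵀ * (X * Q)) *ᵥ w = 0 := by
    rw [← mulVec_mulVec, ← mulVec_mulVec, hXθ, mulVec_zero]
  rw [eq_zero_of_mulVec_eq_zero hG.ne_zero hw, mulVec_zero]

theorem covFactor_apply_self_eq_inv [Field R] [LinearOrder R] [IsStrictOrderedRing R]
    (X : Matrix m p R) (A : Matrix k p R) (Q : Matrix p d R)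
    (hnull : ∀ θ, A *ᵥ θ = 0 ↔ ∃ w, θ = Q *ᵥ w) (hG : IsUnit ((X * Q)ᵀ * (X * Q)).det)
    {j : p} {θ₀ : p → R} (hθ₀ : A *ᵥ θ₀ = 0) (hθ₀j : θ₀ j = 1) {s : R}
    (hdual : ∀ θ, A *ᵥ θ = 0 → (X *ᵥ θ) ⬝ᵥ (X *ᵥ θ₀) = s * θ j) :
    (Q * ((X * Q)ᵀ * (X * Q))⁻¹ * Qᵀ) j j = s⁻¹ := by
  have hs : s ≠ 0 := by
    rintro rfl
    have hXθ₀ : X *ᵥ θ₀ = 0 := dotProduct_self_eq_zero.1 (by simpa using hdual θ₀ hθ₀)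
    simp [eq_zero_of_mulVec_eq_zero_of_constr X A Q hnull hG hθ₀ hXθ₀] at hθ₀j
  have hdual' : ∀ θ, A *ᵥ θ = 0 → (X *ᵥ θ) ⬝ᵥ (X *ᵥ (s⁻¹ • θ₀)) = θ j := fun θ hθ => by
    rw [mulVec_smul, dotProduct_smul, hdual θ hθ, smul_eq_mul, inv_mul_cancel_left₀ hs]
  rw [covFactor_apply_self_eq X A Q hnull hG (by rw [mulVec_smul, hθ₀, smul_zero]) hdual']
  simp [hθ₀j]

end Matrix

theorem Finset.sum_apply_eq_sum_fiberwise {ι κ M : Type*} [Fintype ι] [Fintype κ]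
    [DecidableEq κ] [AddCommMonoid M] (g : ι → κ) (F : κ → ι → M) :
    ∑ i, F (g i) i = ∑ j, ∑ i ∈ {i | g i = j}, F j i := by
  rw [← Finset.sum_fiberwise univ g]
  refine sum_congr rfl fun j _ => sum_congr rfl fun i hi => ?_
  rw [(mem_filter.1 hi).2]

namespace ABCAncova

variable {n L : ℕ}

section GroupStatistics

variable (x : Fin n → ℝ) (r : Fin n → Fin L)

def groupMean (ℓ : Fin L) : ℝ :=
  (∑ i ∈ {i | r i = ℓ}, x i) / (#{i | r i = ℓ} : ℝ)

def groupCentered (i : Fin n) : ℝ := x i - groupMean x r (r i)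

variable {x r}

lemma sum_card_filter_mul (f : Fin L → ℝ) :
    ∑ ℓ, (#{i | r i = ℓ} : ℝ) * f ℓ = ∑ i, f (r i) := by
  simp only [← sum_fiberwise' univ r f, sum_const, nsmul_eq_mul]

lemma sum_sub_groupMean {ℓ : Fin L} (hℓ : 0 < #{i | r i = ℓ}) :
    ∑ i ∈ {i | r i = ℓ}, (x i - groupMean x r ℓ) = 0 := by
  rw [sum_sub_distrib, sum_const, nsmul_eq_mul, groupMean,
    mul_div_cancel₀ _ (by positivity), sub_self]

lemma sum_mul_sub_groupMean {ℓ : Fin L} (hℓ : 0 < #{i | r i = ℓ}) :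
    ∑ i ∈ {i | r i = ℓ}, x i * (x i - groupMean x r ℓ) =
      #{i | r i = ℓ} * groupVar x r ℓ := by
  have hc : (#{i | r i = ℓ} : ℝ) ≠ 0 := by positivity
  simp only [mul_sub, sum_sub_distrib, ← sum_mul, groupVar, groupMean, ← pow_two]
  field_simp

lemma sum_comp_mul_groupCentered (hcount : ∀ ℓ, 0 < #{i | r i = ℓ}) (f : Fin L → ℝ) :
    ∑ i, f (r i) * groupCentered x r i = 0 := by
  unfold groupCentered
  rw [sum_apply_eq_sum_fiberwise r fun ℓ i => f ℓ * (x i - groupMean x r ℓ)]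
  exact sum_eq_zero fun ℓ _ => by rw [← mul_sum, sum_sub_groupMean (hcount ℓ), mul_zero]

lemma sum_comp_mul_mul_groupCentered (hcount : ∀ ℓ, 0 < #{i | r i = ℓ}) {σ2 : ℝ}
    (hvar : ∀ ℓ, groupVar x r ℓ = σ2) (f : Fin L → ℝ) :
    ∑ i, f (r i) * (x i * groupCentered x r i) =
      σ2 * ∑ ℓ, #{i | r i = ℓ} * f ℓ := by
  unfold groupCentered
  rw [sum_apply_eq_sum_fiberwise r fun ℓ i => f ℓ * (x i * (x i - groupMean x r ℓ)), mul_sum]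
  refine sum_congr rfl fun ℓ _ => ?_
  rw [← mul_sum, sum_mul_sub_groupMean (hcount ℓ), hvar]
  ring

end GroupStatistics

variable {x : Fin n → ℝ} {r : Fin n → Fin L}

lemma designMain_mulVec_apply (θ : Unit ⊕ Unit ⊕ Fin L → ℝ) (i : Fin n) :
    (designMain x r *ᵥ θ) i =
      θ (.inl ()) + x i * θ (.inr (.inl ())) + θ (.inr (.inr (r i))) := by
  simp [designMain, mulVec, dotProduct, Fintype.sum_sum_type, ite_mul, add_assoc]

lemma designCat_mulVec_apply (θ : (Unit ⊕ Unit ⊕ Fin L) ⊕ Fin L → ℝ) (i : Fin n) :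
    (designCat x r *ᵥ θ) i = θ (.inl (.inl ())) + x i * θ (.inl (.inr (.inl ()))) +
      θ (.inl (.inr (.inr (r i)))) + x i * θ (.inr (r i)) := by
  simp [designCat, designMain, mulVec, dotProduct, Fintype.sum_sum_type, ite_mul, add_assoc]

lemma designCat_mulVec_elim_zero (θ : Unit ⊕ Unit ⊕ Fin L → ℝ) :
    designCat x r *ᵥ Sum.elim θ 0 = designMain x r *ᵥ θ := by
  ext i
  simp [designCat_mulVec_apply, designMain_mulVec_apply]

lemma constrMain_mulVec_eq_zero_iff (hn : n ≠ 0) (θ : Unit ⊕ Unit ⊕ Fin L → ℝ) :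
    constrMain r *ᵥ θ = 0 ↔ ∑ ℓ, (#{i | r i = ℓ} : ℝ) * θ (.inr (.inr ℓ)) = 0 := by
  simp [constrMain, mulVec, dotProduct, Fintype.sum_sum_type, funext_iff, div_mul_eq_mul_div,
    ← sum_div, hn]

lemma constrCat_mulVec_eq_zero_iff (hn : n ≠ 0) (θ : (Unit ⊕ Unit ⊕ Fin L) ⊕ Fin L → ℝ) :
    constrCat r *ᵥ θ = 0 ↔ ∑ ℓ, (#{i | r i = ℓ} : ℝ) * θ (.inl (.inr (.inr ℓ))) = 0 ∧
      ∑ ℓ, (#{i | r i = ℓ} : ℝ) * θ (.inr ℓ) = 0 := by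
  simp [constrCat, mulVec, dotProduct, Fintype.sum_sum_type, funext_iff, Fin.forall_fin_two,
    div_mul_eq_mul_div, ← sum_div, hn]

variable (x r) in
def slopeRepresenter : Unit ⊕ Unit ⊕ Fin L → ℝ :=
  Sum.elim (fun _ => -((∑ i, x i) / n))
    (Sum.elim (fun _ => 1) fun ℓ => (∑ i, x i) / n - groupMean x r ℓ)

lemma designMain_mulVec_slopeRepresenter :
    designMain x r *ᵥ slopeRepresenter x r = groupCentered x r := by
  ext i
  simp only [designMain_mulVec_apply, slopeRepresenter, groupCentered, Sum.elim_inl,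
    Sum.elim_inr]
  ring

lemma sum_card_mul_slopeRepresenter_inr_inr (hcount : ∀ ℓ, 0 < #{i | r i = ℓ})
    (hn : n ≠ 0) : ∑ ℓ, (#{i | r i = ℓ} : ℝ) * slopeRepresenter x r (.inr (.inr ℓ)) = 0 := by
  have hx : ∑ i, x i = ∑ i, groupMean x r (r i) := by
    simpa [groupCentered, sub_eq_zero, sum_sub_distrib] using
      sum_comp_mul_groupCentered hcount (x := x) fun _ => 1
  simp only [slopeRepresenter, Sum.elim_inr, sum_card_filter_mul]
  rw [sum_sub_distrib, sum_const, card_univ, Fintype.card_fin, nsmul_eq_mul,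
    mul_div_cancel₀ _ (Nat.cast_ne_zero.2 hn), hx, sub_self]

lemma designCat_mulVec_dotProduct_groupCentered (hcount : ∀ ℓ, 0 < #{i | r i = ℓ})
    {σ2 : ℝ} (hvar : ∀ ℓ, groupVar x r ℓ = σ2) {θ : (Unit ⊕ Unit ⊕ Fin L) ⊕ Fin L → ℝ}
    (hθ : ∑ ℓ, (#{i | r i = ℓ} : ℝ) * θ (.inr ℓ) = 0) :
    (designCat x r *ᵥ θ) ⬝ᵥ groupCentered x r = n * σ2 * θ (.inl (.inr (.inl ()))) := by
  let a : Fin L → ℝ := fun ℓ => θ (.inl (.inl ())) + θ (.inl (.inr (.inr ℓ)))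
  let b : Fin L → ℝ := fun ℓ => θ (.inl (.inr (.inl ()))) + θ (.inr ℓ)
  calc (designCat x r *ᵥ θ) ⬝ᵥ groupCentered x r
      = ∑ i, (a (r i) * groupCentered x r i + b (r i) * (x i * groupCentered x r i)) := by
        simp only [dotProduct, designCat_mulVec_apply, a, b]
        exact sum_congr rfl fun i _ => by ring
    _ = σ2 * ∑ ℓ, (#{i | r i = ℓ} : ℝ) * b ℓ := by
        rw [sum_add_distrib, sum_comp_mul_groupCentered hcount,
          sum_comp_mul_mul_groupCentered hcount hvar, zero_add]
    _ = n * σ2 * θ (.inl (.inr (.inl ()))) := by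
        simp only [b, mul_add, sum_add_distrib, hθ, sum_card_filter_mul, sum_const, card_univ,
          Fintype.card_fin, nsmul_eq_mul]
        ring

lemma designMain_mulVec_dotProduct_groupCentered (hcount : ∀ ℓ, 0 < #{i | r i = ℓ})
    {σ2 : ℝ} (hvar : ∀ ℓ, groupVar x r ℓ = σ2) (θ : Unit ⊕ Unit ⊕ Fin L → ℝ) :
    (designMain x r *ᵥ θ) ⬝ᵥ groupCentered x r = n * σ2 * θ (.inr (.inl ())) := by
  simpa [designCat_mulVec_elim_zero] using
    designCat_mulVec_dotProduct_groupCentered hcount hvar (θ := Sum.elim θ 0) (by simp)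

theorem covFactor_designMain_slope {dM : ℕ} (hn : n ≠ 0)
    (hcount : ∀ ℓ, 0 < #{i | r i = ℓ}) {σ2 : ℝ} (hvar : ∀ ℓ, groupVar x r ℓ = σ2)
    {QM : Matrix (Unit ⊕ Unit ⊕ Fin L) (Fin dM) ℝ}
    (hQMnull : ∀ θ, constrMain r *ᵥ θ = 0 ↔ ∃ w, θ = QM *ᵥ w)
    (hGramM : IsUnit ((designMain x r * QM)ᵀ * (designMain x r * QM)).det) :
    (QM * ((designMain x r * QM)ᵀ * (designMain x r * QM))⁻¹ * QMᵀ)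
      (.inr (.inl ())) (.inr (.inl ())) = ((n : ℝ) * σ2)⁻¹ :=
  covFactor_apply_self_eq_inv _ _ _ hQMnull hGramM
    ((constrMain_mulVec_eq_zero_iff hn _).2 (sum_card_mul_slopeRepresenter_inr_inr hcount hn))
    rfl fun θ _ => by
      rw [designMain_mulVec_slopeRepresenter,
        designMain_mulVec_dotProduct_groupCentered hcount hvar]

theorem covFactor_designCat_slope {d : ℕ} (hn : n ≠ 0)
    (hcount : ∀ ℓ, 0 < #{i | r i = ℓ}) {σ2 : ℝ} (hvar : ∀ ℓ, groupVar x r ℓ = σ2)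
    {Q : Matrix ((Unit ⊕ Unit ⊕ Fin L) ⊕ Fin L) (Fin d) ℝ}
    (hQnull : ∀ θ, constrCat r *ᵥ θ = 0 ↔ ∃ w, θ = Q *ᵥ w)
    (hGram : IsUnit ((designCat x r * Q)ᵀ * (designCat x r * Q)).det) :
    (Q * ((designCat x r * Q)ᵀ * (designCat x r * Q))⁻¹ * Qᵀ)
      (.inl (.inr (.inl ()))) (.inl (.inr (.inl ()))) = ((n : ℝ) * σ2)⁻¹ := by
  have hθ₀ : constrCat r *ᵥ Sum.elim (slopeRepresenter x r) 0 = 0 :=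
    (constrCat_mulVec_eq_zero_iff hn _).2
      ⟨sum_card_mul_slopeRepresenter_inr_inr hcount hn, by simp⟩
  refine covFactor_apply_self_eq_inv _ _ _ hQnull hGram hθ₀ rfl fun θ hθ => ?_
  rw [designCat_mulVec_elim_zero, designMain_mulVec_slopeRepresenter,
    designCat_mulVec_dotProduct_groupCentered hcount hvar
      ((constrCat_mulVec_eq_zero_iff hn θ).1 hθ).2]

end ABCAncova

theorem abc_ancova_covariance_factor_invariance_general
    {n L : ℕ} (hL : 0 < L) (dM d : ℕ)
    (x : Fin n → ℝ) (r : Fin n → Fin L)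
    (hcount : ∀ ℓ : Fin L, 0 < (univ.filter (fun i : Fin n => r i = ℓ)).card)
    -- equal-variance condition
    (heqvar : ∀ ℓ : Fin L, groupVar x r ℓ = groupVar x r ⟨0, hL⟩)
    (QM : Matrix (Unit ⊕ Unit ⊕ Fin L) (Fin dM) ℝ)
    (Q : Matrix ((Unit ⊕ Unit ⊕ Fin L) ⊕ Fin L) (Fin d) ℝ)
    -- the columns span the null spaces of the constraint matrices
    (hQMnull : ∀ θ : (Unit ⊕ Unit ⊕ Fin L) → ℝ,
      (constrMain r).mulVec θ = 0 ↔ ∃ w : Fin dM → ℝ, θ = QM.mulVec w)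
    (hQnull : ∀ θ : ((Unit ⊕ Unit ⊕ Fin L) ⊕ Fin L) → ℝ,
      (constrCat r).mulVec θ = 0 ↔ ∃ w : Fin d → ℝ, θ = Q.mulVec w)
    -- the reparametrized designs have full column rank
    (hGramM : IsUnit ((designMain x r * QM)ᵀ * (designMain x r * QM)).det)
    (hGram : IsUnit ((designCat x r * Q)ᵀ * (designCat x r * Q)).det) :
    ((Q * ((designCat x r * Q)ᵀ * (designCat x r * Q))⁻¹ * Qᵀ)
        (Sum.inl (Sum.inr (Sum.inl ()))) (Sum.inl (Sum.inr (Sum.inl ()))) =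
      (QM * ((designMain x r * QM)ᵀ * (designMain x r * QM))⁻¹ * QMᵀ)
        (Sum.inr (Sum.inl ())) (Sum.inr (Sum.inl ()))) ∧
    (∀ SM S : ℝ, 0 < SM → 0 < S →
      S * Real.sqrt
          ((Q * ((designCat x r * Q)ᵀ * (designCat x r * Q))⁻¹ * Qᵀ)
            (Sum.inl (Sum.inr (Sum.inl ()))) (Sum.inl (Sum.inr (Sum.inl ())))) =
        (S / SM) *
          (SM * Real.sqrt
            ((QM * ((designMain x r * QM)ᵀ * (designMain x r * QM))⁻¹ * QMᵀ)
              (Sum.inr (Sum.inl ())) (Sum.inr (Sum.inl ()))))) := by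
  obtain ⟨i₀, -⟩ := card_pos.1 (hcount ⟨0, hL⟩)
  have hn : n ≠ 0 := i₀.pos.ne'
  have hC := ABCAncova.covFactor_designCat_slope hn hcount heqvar hQnull hGram
  have hM := ABCAncova.covFactor_designMain_slope hn hcount heqvar hQMnull hGramM
  refine ⟨hC.trans hM.symm, fun SM S hSM _ => ?_⟩
  rw [hC, hM]
  field_simp

/-- exact invariance of the covariance-factor diagonal entry of the
main `x`-effect.  Under the equal-variance condition and ABCs, the diagonal entries of
the covariance factors `V = Q (X_Qᵀ X_Q)⁻¹ Qᵀ` corresponding to the coefficient on `x`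
coincide between the main-only and cat-modified models; consequently, for any residual
scales `SM, S > 0` the standard errors satisfy the exact ratio
`SE(α̂₁) = (S / SM) · SE(α̂₁^M)`. -/
theorem abc_ancova_covariance_factor_invariance
    {n L : ℕ} (hL : 0 < L) (dM d : ℕ)
    (x : Fin n → ℝ) (r : Fin n → Fin L)
    (hcount : ∀ ℓ : Fin L, 0 < (univ.filter (fun i : Fin n => r i = ℓ)).card)
    -- equal-variance condition
    (heqvar : ∀ ℓ : Fin L, groupVar x r ℓ = groupVar x r ⟨0, hL⟩)
    (QM : Matrix (Unit ⊕ Unit ⊕ Fin L) (Fin dM) ℝ)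
    (Q : Matrix ((Unit ⊕ Unit ⊕ Fin L) ⊕ Fin L) (Fin d) ℝ)
    -- orthonormal columns
    (hQMorth : QMᵀ * QM = 1)
    (hQorth : Qᵀ * Q = 1)
    -- the columns span the null spaces of the constraint matrices
    (hQMnull : ∀ θ : (Unit ⊕ Unit ⊕ Fin L) → ℝ,
      (constrMain r).mulVec θ = 0 ↔ ∃ w : Fin dM → ℝ, θ = QM.mulVec w)
    (hQnull : ∀ θ : ((Unit ⊕ Unit ⊕ Fin L) ⊕ Fin L) → ℝ,
      (constrCat r).mulVec θ = 0 ↔ ∃ w : Fin d → ℝ, θ = Q.mulVec w)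
    -- the reparametrized designs have full column rank
    (hGramM : IsUnit ((designMain x r * QM)ᵀ * (designMain x r * QM)).det)
    (hGram : IsUnit ((designCat x r * Q)ᵀ * (designCat x r * Q)).det) :
    ((Q * ((designCat x r * Q)ᵀ * (designCat x r * Q))⁻¹ * Qᵀ)
        (Sum.inl (Sum.inr (Sum.inl ()))) (Sum.inl (Sum.inr (Sum.inl ()))) =
      (QM * ((designMain x r * QM)ᵀ * (designMain x r * QM))⁻¹ * QMᵀ)
        (Sum.inr (Sum.inl ())) (Sum.inr (Sum.inl ()))) ∧
    (∀ SM S : ℝ, 0 < SM → 0 < S →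
      S * Real.sqrt
          ((Q * ((designCat x r * Q)ᵀ * (designCat x r * Q))⁻¹ * Qᵀ)
            (Sum.inl (Sum.inr (Sum.inl ()))) (Sum.inl (Sum.inr (Sum.inl ())))) =
        (S / SM) *
          (SM * Real.sqrt
            ((QM * ((designMain x r * QM)ᵀ * (designMain x r * QM))⁻¹ * QMᵀ)
              (Sum.inr (Sum.inl ())) (Sum.inr (Sum.inl ()))))) :=
  abc_ancova_covariance_factor_invariance_general hL dM d x r hcount heqvar QM Q hQMnull hQnull
    hGramM hGram

end
end
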